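/- Let H = (U, φ) be a hypergraph in the binary-relation definition, and define φ* = ¬φ ∩ (1' ∪ ˘φ), where ¬φ is the complement relation, 1' the identity relation, and ˘φ the converse relation. Then (U, φ*) is again a hypergraph in the binary-relation definition: (1) for all x, y ∈ U, (x,y) ∈ φ* implies (y,y) ∈ φ*, and (2) for all x, y, z ∈ U, (x,y) ∈ φ* and (y,z) ∈ φ* imply y = z. -/

import Mathlib

/-- The dual relation φ* = ¬φ ∩ (1' ∪ ˘φ). -/
def dualRel {U : Type*} (φ : U → U → Prop) : U → U → Prop :=
  fun x y => ¬ φ x y ∧ (x = y ∨ φ y x)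

section

variable {U : Type*} {φ : U → U → Prop}

theorem dualRel_self_iff {y : U} : dualRel φ y y ↔ ¬ φ y y := by
  simp [dualRel]

-- The only φ-successor of a vertex is the vertex itself, so `φ y x` with `φ y y` forces `x = y`.
theorem not_rel_self_of_dualRel (h2 : ∀ x y z : U, φ x y → φ y z → y = z) {x y : U}
    (hxy : dualRel φ x y) : ¬ φ y y := by
  obtain ⟨hnxy, rfl | hyx⟩ := hxy
  · exact hnxy
  · intro hyy
    obtain rfl := h2 y y x hyy hyx
    exact hnxy hyy

theorem eq_of_dualRel_of_dualRel (h1 : ∀ x y : U, φ x y → φ y y)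
    (h2 : ∀ x y z : U, φ x y → φ y z → y = z) {x y z : U}
    (hxy : dualRel φ x y) (hyz : dualRel φ y z) : y = z := by
  obtain ⟨-, rfl | hzy⟩ := hyz
  · rfl
  · exact absurd (h1 z y hzy) (not_rel_self_of_dualRel h2 hxy)

end

theorem dual_is_murel_hypergraph {U : Type*} (φ : U → U → Prop)
    (h1 : ∀ x y : U, φ x y → φ y y)
    (h2 : ∀ x y z : U, φ x y → φ y z → y = z) :
    (∀ x y : U, dualRel φ x y → dualRel φ y y) ∧
    (∀ x y z : U, dualRel φ x y → dualRel φ y z → y = z) :=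
  ⟨fun _ _ hxy => dualRel_self_iff.2 (not_rel_self_of_dualRel h2 hxy),
    fun _ _ _ => eq_of_dualRel_of_dualRel h1 h2⟩
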